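/- Let G be a finite simple connected graph with at least one median-consistent vertex. Then every edge e belonging to some cycle of G is an edge of an induced 4-cycle of G. -/

import Mathlib

open SimpleGraph

/-- `z` lies on some shortest path connecting `u` and `v` in the graph `G`,
i.e. `z ∈ I(u,v)`. -/
def OnShortestPath {V : Type*} (G : SimpleGraph V) (u v z : V) : Prop :=
  ∃ p : G.Walk u v, p.length = G.dist u v ∧ z ∈ p.support

/-- `m` is a median point of the triple `u, v, w`, i.e. `m ∈ I(u,v) ∩ I(u,w) ∩ I(v,w)`. -/
def IsMedianPt {V : Type*} (G : SimpleGraph V) (u v w m : V) : Prop :=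
  OnShortestPath G u v m ∧ OnShortestPath G u w m ∧ OnShortestPath G v w m

/-- `μ` is a median-consistent (medico) vertex of `G`:
`|I(μ,v,w)| = 1` for all vertices `v, w`. -/
def Medico {V : Type*} (G : SimpleGraph V) (μ : V) : Prop :=
  ∀ v w : V, ∃! m : V, IsMedianPt G μ v w m

/-!
Write `f = G.dist μ`. Since `μ`, `u`, `v` always have a median, adjacent vertices lie on different
levels of `f`, and two distinct lower neighbours `x`, `y` of a vertex `z` have a common lower
neighbour `w` (their median with `μ`), so that `x z y w` is an induced 4-cycle.

An edge `ab` on a cycle is avoided by some walk from `a` to `b`. Take a vertex `z` of maximal level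
on such a walk. If `z` is an endpoint, the 4-cycle below it contains `ab`. Otherwise replacing `z`
by `w` lowers the sum of the levels along the walk, unless one of the two new edges is `ab`, in
which case that 4-cycle contains `ab`.
-/

section
variable {V : Type*} {G : SimpleGraph V}

def IsInducedSquare (G : SimpleGraph V) (a b c d : V) : Prop :=
  G.Adj a b ∧ G.Adj b c ∧ G.Adj c d ∧ G.Adj d a ∧ ¬ G.Adj a c ∧ ¬ G.Adj b d ∧ a ≠ c ∧ b ≠ d

namespace IsInducedSquare
variable {a b c d : V}

lemma rotate (h : IsInducedSquare G a b c d) : IsInducedSquare G b c d a := by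
  obtain ⟨hab, hbc, hcd, hda, hac, hbd, hac', hbd'⟩ := h
  exact ⟨hbc, hcd, hda, hab, hbd, fun h => hac h.symm, hbd', hac'.symm⟩

lemma reflect (h : IsInducedSquare G a b c d) : IsInducedSquare G b a d c := by
  obtain ⟨hab, hbc, hcd, hda, hac, hbd, hac', hbd'⟩ := h
  exact ⟨hab.symm, hda.symm, hcd.symm, hbc.symm, hbd, hac, hbd', hac'⟩

lemma exists_of_edge_eq (h : IsInducedSquare G a b c d) {u v : V} (he : s(u, v) = s(a, b)) :
    ∃ p q, IsInducedSquare G u v p q := by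
  rcases Sym2.eq_iff.mp he with ⟨rfl, rfl⟩ | ⟨rfl, rfl⟩
  exacts [⟨c, d, h⟩, ⟨d, c, h.reflect⟩]

end IsInducedSquare

namespace SimpleGraph.Walk

lemma exists_eq_append_cons_cons {u v z : V} (W : G.Walk u v) (hz : z ∈ W.support)
    (hzu : z ≠ u) (hzv : z ≠ v) :
    ∃ (x y : V) (hx : G.Adj x z) (hy : G.Adj z y) (Q₁ : G.Walk u x) (Q₂ : G.Walk y v),
      W = Q₁.append (cons hx (cons hy Q₂)) := by
  induction W with
  | nil => simp_all
  | @cons u u' v h P ih =>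
    have hzP : z ∈ P.support := by simp_all
    by_cases hzu' : z = u'
    · subst hzu'
      cases P with
      | nil => exact absurd rfl hzv
      | cons hy Q₂ => exact ⟨u, _, h, hy, nil, Q₂, rfl⟩
    · obtain ⟨x, y, hx, hy, Q₁, Q₂, rfl⟩ := ih hzP hzu' hzv
      exact ⟨x, y, hx, hy, cons h Q₁, Q₂, rfl⟩

end SimpleGraph.Walk

lemma onShortestPath_iff (hconn : G.Connected) {u v z : V} :
    OnShortestPath G u v z ↔ G.dist u z + G.dist z v = G.dist u v := by
  classical
  constructor
  · rintro ⟨p, hp, hz⟩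
    have hsplit : (p.takeUntil z hz).length + (p.dropUntil z hz).length = p.length := by
      rw [← Walk.length_append, Walk.take_spec]
    have h₁ : G.dist u z ≤ (p.takeUntil z hz).length := dist_le _
    have h₂ : G.dist z v ≤ (p.dropUntil z hz).length := dist_le _
    have := hconn.dist_triangle (u := u) (v := z) (w := v)
    omega
  · intro h
    obtain ⟨p₁, hp₁⟩ := (hconn.preconnected u z).exists_walk_length_eq_dist
    obtain ⟨p₂, hp₂⟩ := (hconn.preconnected z v).exists_walk_length_eq_dist
    refine ⟨p₁.append p₂, by rw [Walk.length_append, hp₁, hp₂, h], ?_⟩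
    exact (Walk.mem_support_append_iff p₁ p₂).mpr (Or.inl p₁.end_mem_support)

namespace Medico
variable {μ a b : V}

lemma exists_median (hμ : Medico G μ) (hconn : G.Connected) (v w : V) :
    ∃ m, G.dist μ m + G.dist m v = G.dist μ v ∧ G.dist μ m + G.dist m w = G.dist μ w ∧
      G.dist v m + G.dist m w = G.dist v w := by
  obtain ⟨m, ⟨hv, hw, hvw⟩, -⟩ := hμ v w
  exact ⟨m, (onShortestPath_iff hconn).1 hv, (onShortestPath_iff hconn).1 hw,
    (onShortestPath_iff hconn).1 hvw⟩

lemma dist_ne_of_adj (hμ : Medico G μ) (hconn : G.Connected) {u v : V} (h : G.Adj u v) :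
    G.dist μ u ≠ G.dist μ v := by
  obtain ⟨m, hu, hv, huv⟩ := hμ.exists_median hconn u v
  rw [dist_eq_one_iff_adj.mpr h] at huv
  -- the median lies in `I(u, v) = {u, v}`
  obtain hum | hmv : G.dist u m = 0 ∨ G.dist m v = 0 := by omega
  · obtain rfl := hconn.dist_eq_zero_iff.mp hum
    omega
  · obtain rfl := hconn.dist_eq_zero_iff.mp hmv
    rw [SimpleGraph.dist_comm] at huv
    omega

lemma dist_add_one_of_adj_of_le (hμ : Medico G μ) (hconn : G.Connected) {u v : V}
    (h : G.Adj u v) (hle : G.dist μ u ≤ G.dist μ v) : G.dist μ u + 1 = G.dist μ v := by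
  have := hμ.dist_ne_of_adj hconn h
  have := h.diff_dist_adj (u := μ)
  omega

lemma exists_isInducedSquare (hμ : Medico G μ) (hconn : G.Connected) {x z y : V}
    (hxz : G.Adj x z) (hzy : G.Adj z y) (hxy : x ≠ y)
    (hx : G.dist μ x + 1 = G.dist μ z) (hy : G.dist μ y + 1 = G.dist μ z) :
    ∃ w, G.dist μ w + 2 = G.dist μ z ∧ IsInducedSquare G x z y w := by
  have hnxy : ¬ G.Adj x y := fun h => hμ.dist_ne_of_adj hconn h (by omega)
  have hdxy : G.dist x y = 2 := by
    have hle : G.dist x y ≤ 2 := by simpa using dist_le (Walk.cons hxz hzy.toWalk)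
    have h0 : G.dist x y ≠ 0 := fun h => hxy (hconn.dist_eq_zero_iff.mp h)
    have h1 : G.dist x y ≠ 1 := fun h => hnxy (dist_eq_one_iff_adj.mp h)
    omega
  obtain ⟨w, hwx, hwy, hxwy⟩ := hμ.exists_median hconn x y
  rw [hdxy, SimpleGraph.dist_comm] at hxwy
  have hwx1 : G.dist w x = 1 := by omega
  have hwy1 : G.dist w y = 1 := by omega
  refine ⟨w, by omega, hxz, hzy, (dist_eq_one_iff_adj.mp hwy1).symm,
    dist_eq_one_iff_adj.mp hwx1, hnxy, fun h => ?_, hxy, fun h => ?_⟩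
  · have := h.diff_dist_adj (u := μ)
    omega
  · subst h
    omega

lemma exists_isInducedSquare_of_forall_le_start (hμ : Medico G μ) (hconn : G.Connected)
    (hab : G.Adj a b) (W : G.Walk a b) (hW : s(a, b) ∉ W.edges)
    (hmax : ∀ v ∈ W.support, G.dist μ v ≤ G.dist μ a) :
    ∃ p q, IsInducedSquare G a b p q := by
  cases W with
  | nil => exact absurd rfl hab.ne
  | @cons _ x _ hax Q =>
    have hxb : x ≠ b := by rintro rfl; exact hW (by simp)
    have hx := hμ.dist_add_one_of_adj_of_le hconn hax.symm (hmax x (by simp))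
    have hb := hμ.dist_add_one_of_adj_of_le hconn hab.symm (hmax b (by simp))
    obtain ⟨w, -, hsq⟩ := hμ.exists_isInducedSquare hconn hab.symm hax hxb.symm hb hx
    exact ⟨w, x, hsq.reflect⟩

lemma exists_isInducedSquare_or_lower_walk_of_forall_le (hμ : Medico G μ) (hconn : G.Connected)
    {W : G.Walk a b} (hW : s(a, b) ∉ W.edges) {z : V} (hz : z ∈ W.support) (hza : z ≠ a)
    (hzb : z ≠ b) (hmax : ∀ v ∈ W.support, G.dist μ v ≤ G.dist μ z) :
    (∃ p q, IsInducedSquare G a b p q) ∨ ∃ W' : G.Walk a b, s(a, b) ∉ W'.edges ∧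
      (W'.support.map (G.dist μ)).sum < (W.support.map (G.dist μ)).sum := by
  obtain ⟨x, y, hx, hy, Q₁, Q₂, rfl⟩ := W.exists_eq_append_cons_cons hz hza hzb
  have hxz := hμ.dist_add_one_of_adj_of_le hconn hx (hmax x (by simp))
  have hyz := hμ.dist_add_one_of_adj_of_le hconn hy.symm (hmax y (by simp))
  by_cases hxy : x = y
  · -- the walk backtracks through `z`: cut out `x z x`
    subst hxy
    refine Or.inr ⟨Q₁.append Q₂, ?_, ?_⟩
    · simp_all [Walk.edges_append]
    · cases Q₂ <;> simp [Walk.support_append] <;> omega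
  · obtain ⟨w, hw, hsq⟩ := hμ.exists_isInducedSquare hconn hx hy hxy hxz hyz
    by_cases hxw : s(a, b) = s(x, w)
    · exact Or.inl (hsq.rotate.rotate.rotate.exists_of_edge_eq (hxw.trans Sym2.eq_swap))
    by_cases hwy : s(a, b) = s(w, y)
    · exact Or.inl (hsq.rotate.rotate.exists_of_edge_eq (hwy.trans Sym2.eq_swap))
    refine Or.inr ⟨Q₁.append (.cons hsq.2.2.2.1.symm (.cons hsq.2.2.1.symm Q₂)), ?_, ?_⟩
    · simp_all [Walk.edges_append]
    · simp [Walk.support_append]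
      omega

lemma exists_isInducedSquare_or_lower_walk (hμ : Medico G μ) (hconn : G.Connected)
    (hab : G.Adj a b) (W : G.Walk a b) (hW : s(a, b) ∉ W.edges) :
    (∃ p q, IsInducedSquare G a b p q) ∨ ∃ W' : G.Walk a b, s(a, b) ∉ W'.edges ∧
      (W'.support.map (G.dist μ)).sum < (W.support.map (G.dist μ)).sum := by
  obtain ⟨z, hz, hmax⟩ :=
    Multiset.exists_max_image (G.dist μ) (s := (W.support : Multiset V)) (by simp)
  simp only [Multiset.mem_coe] at hz hmax
  by_cases hza : G.dist μ z = G.dist μ a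
  · exact Or.inl (hμ.exists_isInducedSquare_of_forall_le_start hconn hab W hW (hza ▸ hmax))
  by_cases hzb : G.dist μ z = G.dist μ b
  · obtain ⟨p, q, h⟩ := hμ.exists_isInducedSquare_of_forall_le_start hconn hab.symm W.reverse
      (by simpa [Sym2.eq_swap] using hW) (by simpa [hzb] using hmax)
    exact Or.inl ⟨q, p, h.reflect⟩
  exact hμ.exists_isInducedSquare_or_lower_walk_of_forall_le hconn hW hz
    (by rintro rfl; exact hza rfl) (by rintro rfl; exact hzb rfl) hmax

theorem exists_isInducedSquare_of_walk (hμ : Medico G μ) (hconn : G.Connected)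
    (hab : G.Adj a b) (W : G.Walk a b) (hW : s(a, b) ∉ W.edges) :
    ∃ p q, IsInducedSquare G a b p q := by
  induction hN : (W.support.map (G.dist μ)).sum using Nat.strong_induction_on generalizing W with
  | _ N ih =>
    obtain h | ⟨W', hW', hlt⟩ := hμ.exists_isInducedSquare_or_lower_walk hconn hab W hW
    · exact h
    · exact ih _ (hN ▸ hlt) W' hW' rfl

end Medico

section Cycle
variable {n : ℕ} {c : ZMod n → V}

lemma ZMod.natCast_ne_zero_of_pos_of_lt {k : ℕ} (hk : 0 < k) (hkn : k < n) : (k : ZMod n) ≠ 0 :=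
  fun h => Nat.not_dvd_of_pos_of_lt hk hkn ((ZMod.natCast_eq_zero_iff k n).mp h)

def cycleWalk (hc : ∀ i, G.Adj (c i) (c (i + 1))) :
    (m : ℕ) → (j : ZMod n) → G.Walk (c j) (c (j + m))
  | 0, j => Walk.nil.copy rfl (by simp)
  | m + 1, j => Walk.cons (hc j) ((cycleWalk hc m (j + 1)).copy rfl (by push_cast; ring_nf))

lemma mem_edges_cycleWalk (hc : ∀ i, G.Adj (c i) (c (i + 1))) {m : ℕ} {j : ZMod n}
    {e : Sym2 V} (he : e ∈ (cycleWalk hc m j).edges) :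
    ∃ t < m, e = s(c (j + t), c (j + t + 1)) := by
  induction m generalizing j with
  | zero => simp [cycleWalk] at he
  | succ m ih =>
    rw [cycleWalk, Walk.edges_cons, Walk.edges_copy, List.mem_cons] at he
    rcases he with rfl | he
    · exact ⟨0, by omega, by simp⟩
    · obtain ⟨t, ht, rfl⟩ := ih he
      exact ⟨t + 1, by omega, by push_cast; ring_nf⟩

lemma exists_walk_not_mem_edges_of_cycle (hn : 3 ≤ n) (hinj : Function.Injective c)
    (hc : ∀ i, G.Adj (c i) (c (i + 1))) {i : ZMod n} {a b : V}
    (hi : s(a, b) = s(c i, c (i + 1))) : ∃ W : G.Walk a b, s(a, b) ∉ W.edges := by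
  suffices h : ∃ W : G.Walk (c (i + 1)) (c i), s(c i, c (i + 1)) ∉ W.edges by
    obtain ⟨W, hW⟩ := h
    rcases Sym2.eq_iff.mp hi with ⟨rfl, rfl⟩ | ⟨rfl, rfl⟩
    · exact ⟨W.reverse, by simpa using hW⟩
    · exact ⟨W, by rwa [Sym2.eq_swap]⟩
  have hend : i + 1 + ((n - 1 : ℕ) : ZMod n) = i := by
    rw [Nat.cast_sub (by omega), ZMod.natCast_self]
    ring
  refine ⟨(cycleWalk hc (n - 1) (i + 1)).copy rfl (congrArg c hend), fun he => ?_⟩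
  rw [Walk.edges_copy] at he
  obtain ⟨t, ht, hts⟩ := mem_edges_cycleWalk hc he
  rcases Sym2.eq_iff.mp hts with ⟨h₁, -⟩ | ⟨h₁, h₂⟩
  · refine ZMod.natCast_ne_zero_of_pos_of_lt (n := n) (k := t + 1) (by omega) (by omega) ?_
    push_cast
    linear_combination (hinj h₁).symm
  · obtain rfl : t = 0 := by
      by_contra ht0
      refine ZMod.natCast_ne_zero_of_pos_of_lt (n := n) (k := t) (by omega) (by omega) ?_
      linear_combination (hinj h₂).symm
    refine ZMod.natCast_ne_zero_of_pos_of_lt (n := n) (k := 2) (by omega) (by omega) ?_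
    push_cast
    linear_combination (hinj h₁).symm

end Cycle

end

theorem stmt8_general {V : Type*} (G : SimpleGraph V) (hconn : G.Connected)
    (hμ : ∃ μ : V, Medico G μ)
    (a b : V) (hab : G.Adj a b)
    (hcyc : ∃ (n : ℕ) (c : ZMod n → V), 3 ≤ n ∧ Function.Injective c ∧
      (∀ i : ZMod n, G.Adj (c i) (c (i + 1))) ∧
      ∃ i : ZMod n, s(a, b) = s(c i, c (i + 1))) :
    ∃ p q : V, G.Adj b p ∧ G.Adj p q ∧ G.Adj q a ∧
      ¬ G.Adj a p ∧ ¬ G.Adj b q ∧ a ≠ p ∧ b ≠ q := by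
  obtain ⟨μ, hμ⟩ := hμ
  obtain ⟨n, c, hn, hinj, hc, i, hi⟩ := hcyc
  obtain ⟨W, hW⟩ := exists_walk_not_mem_edges_of_cycle hn hinj hc hi
  obtain ⟨p, q, -, hsq⟩ := hμ.exists_isInducedSquare_of_walk hconn hab W hW
  exact ⟨p, q, hsq⟩

/-- In a finite connected graph with at least one medico vertex, every
edge `{a,b}` that belongs to some cycle of `G` is an edge of an induced 4-cycle of `G`
(with vertices `a, b, p, q`, edges `{a,b}, {b,p}, {p,q}, {q,a}` and non-edges
`{a,p}, {b,q}`). -/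
theorem stmt8 {V : Type*} [Fintype V] (G : SimpleGraph V) (hconn : G.Connected)
    (hμ : ∃ μ : V, Medico G μ)
    (a b : V) (hab : G.Adj a b)
    (hcyc : ∃ (n : ℕ) (c : ZMod n → V), 3 ≤ n ∧ Function.Injective c ∧
      (∀ i : ZMod n, G.Adj (c i) (c (i + 1))) ∧
      ∃ i : ZMod n, s(a, b) = s(c i, c (i + 1))) :
    ∃ p q : V, G.Adj b p ∧ G.Adj p q ∧ G.Adj q a ∧
      ¬ G.Adj a p ∧ ¬ G.Adj b q ∧ a ≠ p ∧ b ≠ q :=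
  stmt8_general G hconn hμ a b hab hcyc
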